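/- arXiv:1908.09881 — 2 statements merged into one kernel-verified Lean document; each statement's English description precedes it below -/
import Mathlib

section
/- Suppose y = α + β S* + ε where E[ε | S̄] = 0, S̄ = E[S* | θ] for some σ-algebra generated by θ, Var(S̄) > 0, and all variables are square-integrable. Then Cov(y, S̄)/Var(S̄) = β. That is, the population OLS slope of y on S̄ equals β. -/
/-! Everything rests on the tower property in the form `cov(E[f | m], g) = cov(f, g)` for
`m`-measurable `g`. With `m = σ(θ)` and `g = S̄` it turns `cov(S*, S̄)` into `Var S̄`; with
`m = σ(S̄)` it turns `cov(ε, S̄)` into `cov(0, S̄) = 0`. Bilinearity of the covariance then gives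
`cov(y, S̄) = β Var S̄`. -/

open MeasureTheory ProbabilityTheory

/-- Covariance of two real random variables. -/
noncomputable def cov {Ω : Type*} [MeasurableSpace Ω] (μ : Measure Ω) (f g : Ω → ℝ) : ℝ :=
  ∫ ω, (f ω - ∫ x, f x ∂μ) * (g ω - ∫ x, g x ∂μ) ∂μ

lemma cov_eq_covariance {Ω : Type*} [MeasurableSpace Ω] (μ : Measure Ω) (f g : Ω → ℝ) :
    cov μ f g = cov[f, g; μ] :=
  rfl

section

variable {Ω : Type*} {m m₀ : MeasurableSpace Ω} {μ : Measure Ω} {f g : Ω → ℝ}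

lemma integral_condExp_mul_of_aestronglyMeasurable (hm : m ≤ m₀) [IsFiniteMeasure μ]
    (hf : MemLp f 2 μ) (hg : AEStronglyMeasurable[m] g μ) (hg2 : MemLp g 2 μ) :
    ∫ ω, μ[f | m] ω * g ω ∂μ = ∫ ω, f ω * g ω ∂μ :=
  calc ∫ ω, μ[f | m] ω * g ω ∂μ = ∫ ω, μ[f * g | m] ω ∂μ :=
        integral_congr_ae (condExp_mul_of_aestronglyMeasurable_right hg
          (hf.integrable_mul hg2) (hf.integrable one_le_two)).symm
    _ = ∫ ω, f ω * g ω ∂μ := integral_condExp hm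

lemma covariance_condExp_left (hm : m ≤ m₀) [IsProbabilityMeasure μ]
    (hf : MemLp f 2 μ) (hg : AEStronglyMeasurable[m] g μ) (hg2 : MemLp g 2 μ) :
    cov[μ[f | m], g; μ] = cov[f, g; μ] := by
  rw [covariance_eq_sub (hf.condExp one_le_two) hg2, covariance_eq_sub hf hg2,
    integral_condExp hm]
  congr 1
  exact integral_condExp_mul_of_aestronglyMeasurable hm hf hg hg2

lemma covariance_eq_zero_of_condExp_eq_zero (hm : m ≤ m₀) [IsProbabilityMeasure μ]
    (hf : MemLp f 2 μ) (hg : AEStronglyMeasurable[m] g μ) (hg2 : MemLp g 2 μ)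
    (hf0 : μ[f | m] =ᵐ[μ] 0) :
    cov[f, g; μ] = 0 := by
  rw [← covariance_condExp_left hm hf hg hg2, covariance, integral_congr_ae hf0]
  refine integral_eq_zero_of_ae ?_
  filter_upwards [hf0] with ω hω
  simp [hω]

end

theorem stmt_7_general {Ω E : Type*} [MeasurableSpace Ω] [MeasurableSpace E]
    (μ : Measure Ω) [IsProbabilityMeasure μ]
    (θ : Ω → E) (hθ : Measurable θ)
    (Sstar ε y : Ω → ℝ) (α β : ℝ)
    (hS : MemLp Sstar 2 μ) (hε : MemLp ε 2 μ)
    (hmodel : ∀ ω, y ω = α + β * Sstar ω + ε ω)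
    (Sbar : Ω → ℝ)
    (hSbar : Sbar = μ[Sstar | MeasurableSpace.comap θ inferInstance])
    (hexo : μ[ε | MeasurableSpace.comap Sbar inferInstance] =ᵐ[μ] fun _ => 0)
    (hvar : 0 < variance Sbar μ) :
    cov μ y Sbar / variance Sbar μ = β := by
  have hθm : MeasurableSpace.comap θ inferInstance ≤ _ := hθ.comap_le
  have hSbar_θ : StronglyMeasurable[MeasurableSpace.comap θ inferInstance] Sbar :=
    hSbar ▸ stronglyMeasurable_condExp
  have hSbar_meas : Measurable Sbar := (hSbar_θ.mono hθm).measurable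
  have hSbar2 : MemLp Sbar 2 μ := hSbar ▸ hS.condExp one_le_two
  have hcovS : cov[Sstar, Sbar; μ] = variance Sbar μ := by
    rw [← covariance_condExp_left hθm hS hSbar_θ.aestronglyMeasurable hSbar2, ← hSbar,
      covariance_self hSbar_meas.aemeasurable]
  have hcovε : cov[ε, Sbar; μ] = 0 :=
    covariance_eq_zero_of_condExp_eq_zero hSbar_meas.comap_le hε
      (comap_measurable Sbar).aestronglyMeasurable hSbar2 hexo
  have hy : y = fun ω => α + (β • Sstar + ε) ω :=
    funext fun ω => (hmodel ω).trans (add_assoc ..)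
  have hcov : cov μ y Sbar = β * variance Sbar μ := by
    rw [cov_eq_covariance, hy,
      covariance_const_add_left (((hS.const_smul β).add hε).integrable one_le_two),
      covariance_add_left (hS.const_smul β) hε hSbar2, covariance_smul_left, hcovS, hcovε,
      add_zero]
  rw [hcov, mul_div_cancel_right₀ _ hvar.ne']

/-- Proposition 2, part 1: if `y = α + β S* + ε` with `E[ε | S̄] = 0`, where
`S̄ = E[S* | σ(θ)]`, then the population OLS slope of `y` on `S̄` equals `β`. -/
theorem stmt_7 {Ω E : Type*} [MeasurableSpace Ω] [MeasurableSpace E]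
    (μ : Measure Ω) [IsProbabilityMeasure μ]
    (θ : Ω → E) (hθ : Measurable θ)
    (Sstar ε y : Ω → ℝ) (α β : ℝ)
    (hS : MemLp Sstar 2 μ) (hε : MemLp ε 2 μ) (hy : MemLp y 2 μ)
    (hmodel : ∀ ω, y ω = α + β * Sstar ω + ε ω)
    (Sbar : Ω → ℝ)
    (hSbar : Sbar = μ[Sstar | MeasurableSpace.comap θ inferInstance])
    (hexo : μ[ε | MeasurableSpace.comap Sbar inferInstance] =ᵐ[μ] fun _ => 0)
    (hvar : 0 < variance Sbar μ) :
    cov μ y Sbar / variance Sbar μ = β :=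
  stmt_7_general μ θ hθ Sstar ε y α β hS hε hmodel Sbar hSbar hexo hvar
end

section
/- If Y is a Poisson random variable with mean λ > 0, then the random variable Y log Y - E[Y log Y] (with the convention 0 log 0 = 0) is sub-exponential: there exist constants ν, b > 0 such that E[exp(θ(Y log Y - E[Y log Y]))] ≤ exp(ν²θ²/2) for all |θ| ≤ 1/b. -/
/-!
Write `X = Y log Y - E[Y log Y]`. The pointwise bound `exp u ≤ 1 + u + u² exp |u|` gives,
for `|θ| ≤ s / 2`, `exp (θ X) ≤ 1 + θ X + θ² (8 / s²) exp (s |X|)`; taking expectations,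
`E exp (θ X) ≤ 1 + K θ² ≤ exp (K θ²)` with `K = (8 / s²) E exp (s |X|)`. So it suffices that
`exp (|Y log Y| / 2)` is integrable, i.e. that `∑ λⁿ n^(n/2) / n!` converges. Since
`nⁿ ≤ eⁿ n!`, AM-GM bounds the `n`-th term by `(4⁻ⁿ + (4 e λ²)ⁿ / n!) / 2`.
-/

open MeasureTheory Real

open scoped Nat NNReal

namespace Real

theorem exp_le_one_add_add_sq_mul_exp_abs (u : ℝ) : exp u ≤ 1 + u + u ^ 2 * exp |u| := by
  rcases le_or_gt |u| 1 with hu | hu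
  · have hrem := (abs_le.1 (abs_exp_sub_one_sub_id_le hu)).2
    nlinarith [one_le_exp (abs_nonneg u), sq_nonneg u]
  rcases lt_abs.1 hu with hu | hu
  · rw [abs_of_pos (by linarith)]
    nlinarith [mul_nonneg (by nlinarith : (0 : ℝ) ≤ u ^ 2 - 1) (exp_pos u).le]
  · nlinarith [exp_le_one_iff.2 (by linarith : u ≤ 0), one_le_exp (abs_nonneg u)]

theorem exp_mul_le_of_abs_le {s θ : ℝ} (hs : 0 < s) (hθ : |θ| ≤ s / 2) (x : ℝ) :
    exp (θ * x) ≤ 1 + θ * x + θ ^ 2 * (8 / s ^ 2 * exp (s * |x|)) := by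
  have hsq : x ^ 2 ≤ 8 / s ^ 2 * exp (s * |x| / 2) := by
    have := quadratic_le_exp_of_nonneg (by positivity : 0 ≤ s * |x| / 2)
    rw [div_mul_eq_mul_div, le_div_iff₀ (by positivity)]
    nlinarith [sq_abs x, abs_nonneg x]
  have hmoment : x ^ 2 * exp (s * |x| / 2) ≤ 8 / s ^ 2 * exp (s * |x|) :=
    calc x ^ 2 * exp (s * |x| / 2) ≤ 8 / s ^ 2 * exp (s * |x| / 2) * exp (s * |x| / 2) := by
          gcongr
      _ = 8 / s ^ 2 * exp (s * |x|) := by rw [mul_assoc, ← exp_add]; ring_nf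
  have hθx : |θ * x| ≤ s * |x| / 2 := by
    rw [abs_mul]
    nlinarith [abs_nonneg x]
  calc exp (θ * x) ≤ 1 + θ * x + θ ^ 2 * (x ^ 2 * exp (s * |x| / 2)) := by
        have htaylor := exp_le_one_add_add_sq_mul_exp_abs (θ * x)
        have hexp := exp_le_exp.2 hθx
        nlinarith [sq_nonneg (θ * x)]
    _ ≤ 1 + θ * x + θ ^ 2 * (8 / s ^ 2 * exp (s * |x|)) := by gcongr

theorem pow_mul_exp_mul_log_div_two_div_factorial_le (a : ℝ) (n : ℕ) :
    a ^ n * exp (n * log n / 2) / n ! ≤ ((1 / 4) ^ n + (4 * exp 1 * a ^ 2) ^ n / n !) / 2 := by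
  have hfact : (0 : ℝ) < n ! := by positivity
  have hsq : exp (n * log n / 2) ^ 2 = (n : ℝ) ^ n := by
    rw [sq, ← exp_add, add_halves, exp_nat_mul]
    rcases n.eq_zero_or_pos with rfl | hn
    · simp
    · rw [exp_log (by positivity)]
  have hx : ((2 * a) ^ n * exp (n * log n / 2) / n !) ^ 2 ≤ (4 * exp 1 * a ^ 2) ^ n / n ! := by
    have hpow := pow_div_factorial_le_exp (n : ℝ) (Nat.cast_nonneg n) n
    rw [div_le_iff₀ hfact, ← mul_one (n : ℝ), exp_nat_mul, mul_one] at hpow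
    rw [div_pow, mul_pow, hsq, div_le_div_iff₀ (by positivity) hfact]
    calc ((2 * a) ^ n) ^ 2 * n ^ n * n ! = (4 * a ^ 2) ^ n * n ! * n ^ n := by
          rw [← pow_mul, mul_comm n 2, pow_mul]; ring
      _ ≤ (4 * a ^ 2) ^ n * n ! * (exp 1 ^ n * n !) := by gcongr
      _ = (4 * exp 1 * a ^ 2) ^ n * n ! ^ 2 := by ring
  have hamgm := two_mul_le_add_sq ((2 * a) ^ n * exp (n * log n / 2) / n !) ((1 / 2) ^ n)
  have hy : ((1 / 2 : ℝ) ^ n) ^ 2 = (1 / 4) ^ n := by rw [← pow_mul, mul_comm, pow_mul]; norm_num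
  have hxy : a ^ n * exp (n * log n / 2) / n ! =
      (2 * a) ^ n * exp (n * log n / 2) / n ! * (1 / 2) ^ n := by
    have h2 : (2 : ℝ) ^ n * (1 / 2) ^ n = 1 := by rw [← mul_pow]; norm_num
    rw [mul_pow]
    linear_combination (-(a ^ n * exp (n * log n / 2) / n !)) * h2
  rw [hxy]
  linarith

end Real

namespace ProbabilityTheory

variable {Ω : Type*} [MeasurableSpace Ω] {μ : Measure Ω}

def IsSubexponential (X : Ω → ℝ) (μ : Measure Ω) : Prop :=
  ∃ ν > (0 : ℝ), ∃ b > (0 : ℝ), ∀ θ : ℝ, |θ| ≤ 1 / b →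
    ∫ ω, exp (θ * (X ω - ∫ x, X x ∂μ)) ∂μ ≤ exp (ν ^ 2 * θ ^ 2 / 2)

theorem map_eq_poissonMeasure {Y : Ω → ℕ} (hY : Measurable Y) {r : ℝ≥0}
    (hlaw : ∀ n : ℕ, μ {ω | Y ω = n} = ENNReal.ofReal (exp (-r) * r ^ n / n !)) :
    μ.map Y = poissonMeasure r :=
  Measure.ext_of_singleton fun n => by
    rw [Measure.map_apply hY (measurableSet_singleton n), poissonMeasure_singleton]
    exact hlaw n

theorem integrable_exp_abs_mul_log_div_two_poissonMeasure (r : ℝ≥0) :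
    Integrable (fun n : ℕ => exp (1 / 2 * |(n : ℝ) * log n|)) (poissonMeasure r) := by
  rw [integrable_poissonMeasure_iff]
  have hdom : Summable fun n : ℕ =>
      exp (-r) * (((1 / 4 : ℝ) ^ n + (4 * exp 1 * (r : ℝ) ^ 2) ^ n / n !) / 2) :=
    (((summable_geometric_of_lt_one (by norm_num) (by norm_num)).add
      (Real.summable_pow_div_factorial _)).div_const 2).mul_left _
  refine hdom.of_nonneg_of_le (fun n => by positivity) fun n => ?_
  have hnonneg : 0 ≤ (n : ℝ) * log n := mul_nonneg n.cast_nonneg (log_natCast_nonneg n)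
  calc exp (-r) * r ^ n / n ! * ‖exp (1 / 2 * |(n : ℝ) * log n|)‖
      = exp (-r) * (r ^ n * exp (n * log n / 2) / n !) := by
        rw [norm_of_nonneg (exp_pos _).le, abs_of_nonneg hnonneg, one_div_mul_eq_div]; ring
    _ ≤ _ := mul_le_mul_of_nonneg_left (pow_mul_exp_mul_log_div_two_div_factorial_le _ n)
        (exp_pos _).le

variable [IsProbabilityMeasure μ]

theorem integral_exp_mul_le_of_integral_eq_zero {X : Ω → ℝ} {s θ : ℝ} (hs : 0 < s)
    (hX : Integrable X μ) (hmean : ∫ ω, X ω ∂μ = 0)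
    (hexp : Integrable (fun ω => exp (s * |X ω|)) μ) (hθ : |θ| ≤ s / 2) :
    ∫ ω, exp (θ * X ω) ∂μ ≤ exp (θ ^ 2 * (8 / s ^ 2 * ∫ ω, exp (s * |X ω|) ∂μ)) := by
  have hlin : Integrable (fun ω => 1 + θ * X ω) μ := (integrable_const 1).add (hX.const_mul θ)
  have hquad : Integrable (fun ω => θ ^ 2 * (8 / s ^ 2 * exp (s * |X ω|))) μ :=
    (hexp.const_mul _).const_mul _
  calc ∫ ω, exp (θ * X ω) ∂μ
      ≤ ∫ ω, (1 + θ * X ω + θ ^ 2 * (8 / s ^ 2 * exp (s * |X ω|))) ∂μ :=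
        integral_mono_of_nonneg (ae_of_all _ fun ω => (exp_pos _).le) (hlin.add hquad)
          (ae_of_all _ fun ω => exp_mul_le_of_abs_le hs hθ (X ω))
    _ = 1 + θ ^ 2 * (8 / s ^ 2 * ∫ ω, exp (s * |X ω|) ∂μ) := by
        rw [integral_add hlin hquad, integral_add (integrable_const 1) (hX.const_mul θ),
          integral_const_mul, integral_const_mul, integral_const_mul, hmean]
        simp
    _ ≤ exp (θ ^ 2 * (8 / s ^ 2 * ∫ ω, exp (s * |X ω|) ∂μ)) := by
        rw [add_comm]
        exact add_one_le_exp _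

theorem isSubexponential_of_integrable_exp_abs {X : Ω → ℝ} {s : ℝ} (hs : 0 < s)
    (hXm : AEStronglyMeasurable X μ) (hexp : Integrable (fun ω => exp (s * |X ω|)) μ) :
    IsSubexponential X μ := by
  set c := ∫ x, X x ∂μ
  have hX : Integrable X μ := by
    refine hexp.div_const s |>.mono' hXm (ae_of_all _ fun ω => ?_)
    rw [norm_eq_abs, le_div_iff₀ hs]
    nlinarith [add_one_le_exp (s * |X ω|)]
  have hexp_sub : Integrable (fun ω => exp (s * |X ω - c|)) μ := by
    refine (hexp.const_mul (exp (s * |c|))).mono' (by fun_prop) (ae_of_all _ fun ω => ?_)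
    rw [norm_of_nonneg (exp_pos _).le, ← exp_add, exp_le_exp]
    nlinarith [abs_sub (X ω) c]
  set K := 8 / s ^ 2 * ∫ ω, exp (s * |X ω - c|) ∂μ
  have hK : 0 < K := mul_pos (by positivity) (integral_exp_pos hexp_sub)
  refine ⟨√(2 * K), by positivity, 2 / s, by positivity, fun θ hθ => ?_⟩
  rw [one_div_div] at hθ
  calc ∫ ω, exp (θ * (X ω - c)) ∂μ ≤ exp (θ ^ 2 * K) :=
        integral_exp_mul_le_of_integral_eq_zero hs (hX.sub (integrable_const c))
          (by simp [integral_sub hX (integrable_const c), c]) hexp_sub hθ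
    _ = exp (√(2 * K) ^ 2 * θ ^ 2 / 2) := by
        rw [sq_sqrt (by positivity)]; ring_nf

end ProbabilityTheory

open ProbabilityTheory

/-- The `Y log Y` term of the Poisson log-likelihood is sub-exponential: if `Y` is
Poisson(λ), there exist `ν, b > 0` such that the centered variable
`Y log Y - E[Y log Y]` satisfies the sub-exponential MGF bound for `|θ| ≤ 1/b`.
(Here `0 log 0 = 0`, which is the convention of `Real.log`.) -/
theorem stmt_13 {Ω : Type*} [MeasurableSpace Ω] (μ : Measure Ω) [IsProbabilityMeasure μ]
    (lam : ℝ) (hlam : 0 < lam)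
    (Y : Ω → ℕ) (hmeas : Measurable Y)
    (hlaw : ∀ m : ℕ,
      μ {ω : Ω | Y ω = m} = ENNReal.ofReal (exp (-lam) * lam ^ m / m.factorial)) :
    ∃ ν > (0 : ℝ), ∃ b > (0 : ℝ), ∀ θ : ℝ, |θ| ≤ 1 / b →
      ∫ ω, exp (θ * ((Y ω : ℝ) * log (Y ω) -
          ∫ x, ((Y x : ℝ) * log (Y x)) ∂μ)) ∂μ ≤ exp (ν ^ 2 * θ ^ 2 / 2) := by
  have hmap : μ.map Y = poissonMeasure lam.toNNReal :=
    map_eq_poissonMeasure hmeas fun n => by rw [Real.coe_toNNReal lam hlam.le]; exact hlaw n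
  have hexp : Integrable (fun ω => exp (1 / 2 * |(Y ω : ℝ) * log (Y ω)|)) μ := by
    have := integrable_exp_abs_mul_log_div_two_poissonMeasure lam.toNNReal
    rwa [← hmap, integrable_map_measure .of_discrete hmeas.aemeasurable] at this
  exact isSubexponential_of_integrable_exp_abs one_half_pos
    ((measurable_from_nat (f := fun n : ℕ => (n : ℝ) * log n)).comp hmeas).aestronglyMeasurable
    hexp
end
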